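/- On any bounded interval [A, 1.01A] with A > 0, the Lebesgue measure of the complement of 𝒟(ν,τ;α) (the set of ω with |ωα·k − 2nπ| ≥ ν/∏_j(1+⟨⟨j⟩⟩^{1+τ}|k_j|^{1+τ}) for all nonzero finitely supported k and all integers n) is at most ν·C(τ,τ₀,ν₀,A), where α satisfies the infinite-dimensional Diophantine condition with constants ν₀, τ₀ and τ > τ₀ + 1. -/

import Mathlib

open MeasureTheory Complex

/-- `⟨⟨j⟩⟩ = max {|j|, 1}` -/
noncomputable def jwt (j : ℕ) : ℝ := max (j : ℝ) 1

/-- `|k|_s = ∑_j ⟨⟨j⟩⟩^s |k_j|` for a finitely supported integer vector `k`. -/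
noncomputable def swt (s : ℝ) (k : ℕ →₀ ℤ) : ℝ :=
  ∑ j ∈ k.support, jwt j ^ s * |(k j : ℝ)|

/-- `‖k‖₁ = ∑_j |k_j|`. -/
noncomputable def twt1 (k : ℕ →₀ ℤ) : ℝ := ∑ j ∈ k.support, |(k j : ℝ)|

/-- `∏_j (1 + ⟨⟨j⟩⟩^{1+τ} |k_j|^{1+τ})` -/
noncomputable def dprod (τ : ℝ) (k : ℕ →₀ ℤ) : ℝ :=
  ∏ j ∈ k.support, (1 + jwt j ^ (1 + τ) * |(k j : ℝ)| ^ (1 + τ))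

/-- `α · k` -/
noncomputable def adot (α : ℕ → ℝ) (k : ℕ →₀ ℤ) : ℝ :=
  ∑ j ∈ k.support, α j * (k j : ℝ)

/-- `k · σ` for complex `σ`. -/
noncomputable def cdot (k : ℕ →₀ ℤ) (σ : ℕ → ℂ) : ℂ :=
  ∑ j ∈ k.support, (k j : ℂ) * σ j

/-- The weighted ℓ¹ Fourier norm `‖h‖_ρ = ∑_k |h_k| e^{ρ |k|_s}` (valued in `ℝ≥0∞`). -/
noncomputable def anorm (ρ s : ℝ) (h : (ℕ →₀ ℤ) → ℂ) : ENNReal :=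
  ∑' k : ℕ →₀ ℤ, (‖h k‖₊ : ENNReal) * ENNReal.ofReal (Real.exp (ρ * swt s k))

/-- Evaluation of a Fourier coefficient family at a (complexified) point of the torus. -/
noncomputable def aeval (h : (ℕ →₀ ℤ) → ℂ) (σ : ℕ → ℂ) : ℂ :=
  ∑' k : ℕ →₀ ℤ, h k * Complex.exp (Complex.I * cdot k σ)

/-- The thickened infinite-dimensional torus (imaginary parts of width `ρ ⟨⟨j⟩⟩^s`). -/
def Strip (ρ s : ℝ) : Set (ℕ → ℂ) := {σ | ∀ j, |(σ j).im| ≤ ρ * jwt j ^ s}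

/-- `F` is represented on the strip of width `ρ` by the Fourier coefficients `c`. -/
def HasCoeffsOn (ρ s : ℝ) (F : (ℕ → ℂ) → ℂ) (c : (ℕ →₀ ℤ) → ℂ) : Prop :=
  ∀ σ ∈ Strip ρ s, HasSum (fun k : ℕ →₀ ℤ => c k * Complex.exp (Complex.I * cdot k σ)) (F σ)

/-! Write `D_τ(k)` for `dprod τ k`. For fixed `k ≠ 0` the bad frequencies `ω` with
`|ω α·k - 2nπ| < ν / D_τ(k)` form intervals of length `2ν / (D_τ(k) |α·k|)`, one for each of the
`O(1 + |α·k|)` integers `n` that can occur for `ω ∈ [A, 1.01A]`. The Diophantine condition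
`|α·k| ≥ ν₀ / D_{τ₀}(k)` bounds their total length by `O(ν D_{τ₀}(k) / D_τ(k))`, and factor by
factor `D_{τ₀}(k) / D_τ(k) ≤ ∏_{k_j ≠ 0} 2 ⟨⟨j⟩⟩^{-δ} |k_j|^{-δ}` with `δ = τ - τ₀ > 1`.
The sum of these products over all finitely supported `k` factorises into
`∏_j (1 + 2 ζ ⟨⟨j⟩⟩^{-δ}) ≤ exp (2 ζ ∑_j ⟨⟨j⟩⟩^{-δ})` with `ζ = ∑_{m ∈ ℤ} |m|^{-δ}`.
For `ν > 1` the length of the interval is already a bound. -/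

open Finset ENNReal Real

theorem Finset.prod_sum_eq_sum_finsupp {ι α R : Type*} [Zero α] [CommSemiring R]
    (s : Finset ι) (t : ι → Finset α) (f : ι → α → R) :
    ∏ i ∈ s, ∑ a ∈ t i, f i a = ∑ k ∈ s.finsupp t, ∏ i ∈ s, f i (k i) := by
  classical
  rw [prod_sum, Finset.finsupp, sum_map]
  refine sum_congr rfl fun p _ => ?_
  rw [← prod_attach s]
  exact prod_congr rfl fun i _ => by simp [Finsupp.indicator_of_mem i.2]

theorem Finsupp.tsum_prod_le {ι α : Type*} [Zero α] {f : ι → α → ℝ≥0∞}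
    (hf : ∀ i, f i 0 = 1) {C : ℝ≥0∞} (hC : ∀ s : Finset ι, ∏ i ∈ s, ∑' a, f i a ≤ C) :
    ∑' k : ι →₀ α, k.prod f ≤ C := by
  classical
  refine ENNReal.tsum_eq_iSup_sum ▸ iSup_le fun F => ?_
  set s := F.biUnion Finsupp.support
  have hF : F ⊆ s.finsupp fun i => F.image (· i) := fun k hk =>
    mem_finsupp_iff.2 ⟨subset_biUnion_of_mem _ hk, fun i _ => mem_image_of_mem _ hk⟩
  calc ∑ k ∈ F, k.prod f = ∑ k ∈ F, ∏ i ∈ s, f i (k i) :=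
        Finset.sum_congr rfl fun k hk => k.prod_of_support_subset (subset_biUnion_of_mem _ hk) f
          fun i _ => hf i
    _ ≤ ∑ k ∈ s.finsupp fun i => F.image (· i), ∏ i ∈ s, f i (k i) :=
        sum_le_sum_of_subset hF
    _ = ∏ i ∈ s, ∑ a ∈ F.image (· i), f i a := (prod_sum_eq_sum_finsupp _ _ _).symm
    _ ≤ ∏ i ∈ s, ∑' a, f i a := prod_le_prod' fun i _ => ENNReal.sum_le_tsum _
    _ ≤ C := hC s

lemma one_le_jwt (j : ℕ) : 1 ≤ jwt j := le_max_right _ _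

lemma jwt_pos (j : ℕ) : 0 < jwt j := one_pos.trans_le (one_le_jwt j)

lemma summable_jwt_rpow_neg {δ : ℝ} (hδ : 1 < δ) : Summable fun j => jwt j ^ (-δ) := by
  refine (summable_nat_add_iff 1).1 <|
    ((summable_nat_add_iff 1).2 (Real.summable_nat_rpow.2 (neg_lt_neg hδ))).congr fun j => ?_
  simp [jwt]

noncomputable def resonanceWeight (δ : ℝ) (j : ℕ) (m : ℤ) : ℝ≥0∞ :=
  if m = 0 then 1 else ENNReal.ofReal (2 * jwt j ^ (-δ) * |(m : ℝ)| ^ (-δ))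

lemma tsum_resonanceWeight {δ : ℝ} (hδ : 1 < δ) (j : ℕ) :
    ∑' m : ℤ, resonanceWeight δ j m
      = ENNReal.ofReal (1 + 2 * (∑' m : ℤ, |(m : ℝ)| ^ (-δ)) * jwt j ^ (-δ)) := by
  have hw := (jwt_pos j).le
  -- `0 ^ (-δ) = 0`, so the `m = 0` term of the second sum vanishes
  have hsplit : ∀ m : ℤ, resonanceWeight δ j m
      = (if m = 0 then 1 else 0) + ENNReal.ofReal (2 * jwt j ^ (-δ) * |(m : ℝ)| ^ (-δ)) := by
    intro m
    rcases eq_or_ne m 0 with rfl | hm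
    · simp [resonanceWeight, Real.zero_rpow (neg_ne_zero.2 (by linarith : δ ≠ 0))]
    · simp [resonanceWeight, hm]
  rw [tsum_congr hsplit, ENNReal.tsum_add, tsum_ite_eq,
    ← ENNReal.ofReal_tsum_of_nonneg (fun m => by positivity)
      ((Real.summable_abs_int_rpow hδ).mul_left _),
    tsum_mul_left, ← ENNReal.ofReal_one, ← ENNReal.ofReal_add zero_le_one (by positivity)]
  ring_nf

lemma tsum_prod_resonanceWeight_le {δ : ℝ} (hδ : 1 < δ) :
    ∑' k : ℕ →₀ ℤ, k.prod (resonanceWeight δ)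
      ≤ ENNReal.ofReal (Real.exp (2 * (∑' m : ℤ, |(m : ℝ)| ^ (-δ)) * ∑' j, jwt j ^ (-δ))) := by
  set Z := ∑' m : ℤ, |(m : ℝ)| ^ (-δ)
  have hZ : 0 ≤ Z := tsum_nonneg fun m => by positivity
  have hx : ∀ j, 0 ≤ 2 * Z * jwt j ^ (-δ) := fun j => by have := jwt_pos j; positivity
  refine Finsupp.tsum_prod_le (fun j => by simp [resonanceWeight]) fun s => ?_
  simp_rw [tsum_resonanceWeight hδ]
  rw [← ENNReal.ofReal_prod_of_nonneg fun j _ => by linarith [hx j]]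
  refine ENNReal.ofReal_le_ofReal <| (Real.prod_one_add_le_exp_sum s hx).trans ?_
  rw [Real.exp_le_exp, ← mul_sum]
  exact mul_le_mul_of_nonneg_left
    ((summable_jwt_rpow_neg hδ).sum_le_tsum s fun j _ => by have := jwt_pos j; positivity)
    (by positivity)

lemma one_add_rpow_div_one_add_rpow_le {x p q : ℝ} (hx : 1 ≤ x) (hp : 0 ≤ p) :
    (1 + x ^ p) / (1 + x ^ q) ≤ 2 * x ^ (-(q - p)) := by
  have hx0 : 0 < x := one_pos.trans_le hx
  have hxq : 0 < x ^ q := Real.rpow_pos_of_pos hx0 q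
  rw [div_le_iff₀ (by positivity)]
  calc 1 + x ^ p ≤ 2 * x ^ p := by linarith [Real.one_le_rpow hx hp]
    _ = 2 * x ^ (-(q - p)) * x ^ q := by
        rw [mul_assoc, ← Real.rpow_add hx0]; ring_nf
    _ ≤ 2 * x ^ (-(q - p)) * (1 + x ^ q) := by gcongr; linarith

lemma one_le_dprod (τ : ℝ) (k : ℕ →₀ ℤ) : 1 ≤ dprod τ k :=
  one_le_prod fun j _ => le_add_of_nonneg_right <| by have := jwt_pos j; positivity

lemma ofReal_dprod_div_le_prod_resonanceWeight {τ₀ τ : ℝ} (hτ₀ : 0 ≤ 1 + τ₀) (k : ℕ →₀ ℤ) :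
    ENNReal.ofReal (dprod τ₀ k / dprod τ k) ≤ k.prod (resonanceWeight (τ - τ₀)) := by
  rw [dprod, dprod, ← Finset.prod_div_distrib,
    ENNReal.ofReal_prod_of_nonneg fun j _ => by have := jwt_pos j; positivity]
  refine prod_le_prod' fun j hj => ?_
  have hkj : 1 ≤ |(k j : ℝ)| := by
    exact_mod_cast Int.one_le_abs (Finsupp.mem_support_iff.1 hj)
  have hw := jwt_pos j
  rw [resonanceWeight, if_neg (Finsupp.mem_support_iff.1 hj), mul_assoc,
    ← Real.mul_rpow hw.le (abs_nonneg _), ← Real.mul_rpow hw.le (abs_nonneg _),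
    ← Real.mul_rpow hw.le (abs_nonneg _)]
  refine ENNReal.ofReal_le_ofReal (one_add_rpow_div_one_add_rpow_le ?_ hτ₀) |>.trans_eq ?_
  · nlinarith [one_le_jwt j]
  · ring_nf

lemma volume_abs_mul_sub_lt (a c ε : ℝ) (ha : a ≠ 0) :
    volume {ω : ℝ | |ω * a - c| < ε} = ENNReal.ofReal (2 * (ε / |a|)) := by
  have : {ω : ℝ | |ω * a - c| < ε} = Metric.ball (c / a) (ε / |a|) := by
    ext ω
    rw [Set.mem_ofPred_eq, Metric.mem_ball, Real.dist_eq, lt_div_iff₀ (abs_pos.2 ha), ← abs_mul,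
      sub_mul, div_mul_cancel₀ _ ha]
  rw [this, Real.volume_ball]

lemma card_Icc_ceil_floor_le {x y : ℝ} (h : x ≤ y + 1) :
    ((Icc ⌈x⌉ ⌊y⌋).card : ℝ) ≤ y - x + 1 := by
  rw [Int.card_Icc, ← Int.cast_natCast, Int.toNat_eq_max, Int.cast_max]
  push_cast
  exact max_le (by linarith [Int.floor_le y, Int.le_ceil x]) (by linarith)

lemma tsum_volume_resonant_le_of_pos {u v a ε : ℝ} (huv : u ≤ v) (ha : 0 < a) (hε : 0 ≤ ε) :
    ∑' n : ℤ, volume (Set.Icc u v ∩ {ω | |ω * a - 2 * n * π| < ε})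
      ≤ ENNReal.ofReal ((((v - u) * a + 2 * ε) / (2 * π) + 1) * (2 * (ε / a))) := by
  set x := (u * a - ε) / (2 * π)
  set y := (v * a + ε) / (2 * π)
  have hxy : x ≤ y := div_le_div_of_nonneg_right (by nlinarith) (by positivity)
  have hsupp : ∀ n ∉ Icc ⌈x⌉ ⌊y⌋, Set.Icc u v ∩ {ω | |ω * a - 2 * n * π| < ε} = ∅ := by
    intro n hn
    refine Set.eq_empty_of_forall_notMem fun ω ⟨⟨hu, hv⟩, hω⟩ => hn ?_
    obtain ⟨h₁, h₂⟩ := abs_lt.1 (show |ω * a - 2 * n * π| < ε from hω)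
    rw [mem_Icc, Int.ceil_le, Int.le_floor, div_le_iff₀ (by positivity),
      le_div_iff₀ (by positivity)]
    constructor <;> nlinarith
  rw [tsum_eq_sum fun n hn => by rw [hsupp n hn, measure_empty]]
  calc ∑ n ∈ Icc ⌈x⌉ ⌊y⌋, volume (Set.Icc u v ∩ {ω | |ω * a - 2 * n * π| < ε})
      ≤ ∑ _n ∈ Icc ⌈x⌉ ⌊y⌋, ENNReal.ofReal (2 * (ε / a)) := sum_le_sum fun n _ =>
        (measure_mono Set.inter_subset_right).trans_eq <| by
          rw [volume_abs_mul_sub_lt _ _ _ ha.ne', abs_of_pos ha]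
    _ = ENNReal.ofReal ((Icc ⌈x⌉ ⌊y⌋).card * (2 * (ε / a))) := by
        rw [sum_const, nsmul_eq_mul, ENNReal.ofReal_mul (Nat.cast_nonneg _), ENNReal.ofReal_natCast]
    _ ≤ ENNReal.ofReal ((y - x + 1) * (2 * (ε / a))) := by
        gcongr
        exact card_Icc_ceil_floor_le (by linarith)
    _ = _ := by congr 2; ring

lemma tsum_volume_resonant_le {u v a ε : ℝ} (huv : u ≤ v) (ha : a ≠ 0) (hε : 0 ≤ ε) :
    ∑' n : ℤ, volume (Set.Icc u v ∩ {ω | |ω * a - 2 * n * π| < ε})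
      ≤ ENNReal.ofReal ((((v - u) * |a| + 2 * ε) / (2 * π) + 1) * (2 * (ε / |a|))) := by
  rcases ha.lt_or_gt with ha | ha
  · rw [abs_of_neg ha, ← (Equiv.neg ℤ).tsum_eq]
    convert tsum_volume_resonant_le_of_pos huv (neg_pos.2 ha) hε using 6 with n ω
    ext ω
    rw [Equiv.neg_apply, Int.cast_neg, ← abs_neg]
    ring_nf
  · rw [abs_of_pos ha]
    exact tsum_volume_resonant_le_of_pos huv ha hε

lemma resonant_bound_le {L B ε ν₀ D₀ : ℝ} (hL : 0 ≤ L) (hν₀ : 0 < ν₀) (hD₀ : 1 ≤ D₀)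
    (hB : ν₀ / D₀ ≤ B) (hε : 0 ≤ ε) (hε1 : ε ≤ 1) :
    ((L * B + 2 * ε) / (2 * π) + 1) * (2 * (ε / B)) ≤ ε * (L + 4 / ν₀) * D₀ := by
  have hB0 : 0 < B := (by positivity : 0 < ν₀ / D₀).trans_le hB
  have hinv : ε / B ≤ ε * (D₀ / ν₀) := by
    rw [div_le_iff₀ hB0, mul_assoc]
    exact le_mul_of_one_le_right hε <| by rwa [← div_le_iff₀' (by positivity), one_div_div]
  have hπ : 1 ≤ π := by linarith [pi_gt_three]
  calc ((L * B + 2 * ε) / (2 * π) + 1) * (2 * (ε / B))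
      = ε * L / π + 2 * (ε / π + 1) * (ε / B) := by field_simp; ring
    _ ≤ ε * L * D₀ + 2 * 2 * (ε * (D₀ / ν₀)) := by
        gcongr
        · exact (div_le_self (by positivity) hπ).trans (le_mul_of_one_le_right (by positivity) hD₀)
        · linarith [div_le_self hε hπ]
    _ = ε * (L + 4 / ν₀) * D₀ := by ring

lemma tsum_volume_resonant_le_prod_resonanceWeight {u v τ₀ τ ν₀ ν a : ℝ} {k : ℕ →₀ ℤ}
    (huv : u ≤ v) (hτ₀ : 0 ≤ 1 + τ₀) (hν₀ : 0 < ν₀) (hν : 0 < ν) (hν1 : ν ≤ 1)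
    (hk : ν₀ / dprod τ₀ k ≤ |a|) :
    ∑' n : ℤ, volume (Set.Icc u v ∩ {ω | |ω * a - 2 * n * π| < ν / dprod τ k})
      ≤ ENNReal.ofReal (ν * (v - u + 4 / ν₀)) * k.prod (resonanceWeight (τ - τ₀)) := by
  have hD₀ := one_le_dprod τ₀ k
  have hD := one_le_dprod τ k
  have ha : a ≠ 0 := abs_pos.1 <| (by positivity : 0 < ν₀ / dprod τ₀ k).trans_le hk
  have hε1 : ν / dprod τ k ≤ 1 := div_le_one_of_le₀ (hν1.trans hD) (by positivity)
  calc _ ≤ _ := tsum_volume_resonant_le huv ha (by positivity)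
    _ ≤ ENNReal.ofReal (ν / dprod τ k * (v - u + 4 / ν₀) * dprod τ₀ k) :=
        ENNReal.ofReal_le_ofReal <|
          resonant_bound_le (by linarith) hν₀ hD₀ hk (by positivity) hε1
    _ = ENNReal.ofReal (ν * (v - u + 4 / ν₀)) * ENNReal.ofReal (dprod τ₀ k / dprod τ k) := by
        rw [← ENNReal.ofReal_mul (mul_nonneg hν.le (add_nonneg (sub_nonneg.2 huv) (by positivity)))]
        congr 1
        ring
    _ ≤ _ := by gcongr; exact ofReal_dprod_div_le_prod_resonanceWeight hτ₀ k

lemma volume_Icc_diff_diophantine_le {u v τ₀ τ ν₀ ν : ℝ} {α : ℕ → ℝ} (huv : u ≤ v)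
    (hτ₀ : 0 ≤ 1 + τ₀) (hδ : 1 < τ - τ₀) (hν₀ : 0 < ν₀) (hν : 0 < ν) (hν1 : ν ≤ 1)
    (hdio : ∀ k : ℕ →₀ ℤ, k ≠ 0 → ν₀ / dprod τ₀ k ≤ |adot α k|) :
    volume (Set.Icc u v \ {ω : ℝ | ∀ k : ℕ →₀ ℤ, k ≠ 0 → ∀ n : ℤ,
        ν / dprod τ k ≤ |ω * adot α k - 2 * n * π|})
      ≤ ENNReal.ofReal (ν * (v - u + 4 / ν₀)) * ENNReal.ofReal
          (Real.exp (2 * (∑' m : ℤ, |(m : ℝ)| ^ (-(τ - τ₀))) * ∑' j, jwt j ^ (-(τ - τ₀)))) := by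
  set K := ENNReal.ofReal (ν * (v - u + 4 / ν₀))
  have hcover : Set.Icc u v \ {ω : ℝ | ∀ k : ℕ →₀ ℤ, k ≠ 0 → ∀ n : ℤ,
        ν / dprod τ k ≤ |ω * adot α k - 2 * n * π|}
      ⊆ ⋃ k : {k : ℕ →₀ ℤ // k ≠ 0}, ⋃ n : ℤ,
          Set.Icc u v ∩ {ω | |ω * adot α k - 2 * n * π| < ν / dprod τ k} := by
    rintro ω ⟨hω, hωD⟩
    simp only [Set.mem_ofPred_eq, not_forall, not_le] at hωD
    obtain ⟨k, hk, n, hn⟩ := hωD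
    exact Set.mem_iUnion₂.2 ⟨⟨k, hk⟩, n, hω, hn⟩
  calc _ ≤ ∑' k : {k : ℕ →₀ ℤ // k ≠ 0}, ∑' n : ℤ,
        volume (Set.Icc u v ∩ {ω | |ω * adot α k - 2 * n * π| < ν / dprod τ k}) :=
        (measure_mono hcover).trans <|
          (measure_iUnion_le _).trans (ENNReal.tsum_le_tsum fun k => measure_iUnion_le _)
    _ ≤ ∑' k : {k : ℕ →₀ ℤ // k ≠ 0}, K * (k : ℕ →₀ ℤ).prod (resonanceWeight (τ - τ₀)) :=
        ENNReal.tsum_le_tsum fun k =>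
          tsum_volume_resonant_le_prod_resonanceWeight huv hτ₀ hν₀ hν hν1 (hdio k k.2)
    _ ≤ ∑' k : ℕ →₀ ℤ, K * k.prod (resonanceWeight (τ - τ₀)) :=
        ENNReal.tsum_comp_le_tsum_of_injective Subtype.val_injective _
    _ ≤ _ := by
        rw [ENNReal.tsum_mul_left]
        gcongr
        exact tsum_prod_resonanceWeight_le hδ

/-- on a bounded interval `[A, 1.01 A]` the measure of the complement of
`𝒟(ν,τ;α)` is at most `ν · C(τ,τ₀,ν₀,A)`, for `α` satisfying the infinite-dimensional
Diophantine condition with constants `ν₀, τ₀` and `τ > τ₀ + 1`. -/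
theorem stmt1 (τ₀ ν₀ τ A : ℝ) (hν₀ : 0 < ν₀) (hτ₀ : 0 < τ₀) (hτ : τ₀ + 1 < τ) (hA : 0 < A) :
    ∃ C : ℝ, 0 < C ∧
      ∀ (α : ℕ → ℝ), (∀ j, α j ∈ Set.Icc (0 : ℝ) 1) →
        (∀ k : ℕ →₀ ℤ, k ≠ 0 → ν₀ / dprod τ₀ k ≤ |adot α k|) →
        ∀ ν : ℝ, 0 < ν →
          MeasureTheory.volume
            (Set.Icc A (1.01 * A) \
              {ω : ℝ | ∀ k : ℕ →₀ ℤ, k ≠ 0 → ∀ n : ℤ,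
                ν / dprod τ k ≤ |ω * adot α k - 2 * (n : ℝ) * Real.pi|})
            ≤ ENNReal.ofReal (ν * C) := by
  set K := 1.01 * A - A + 4 / ν₀
  set M := Real.exp (2 * (∑' m : ℤ, |(m : ℝ)| ^ (-(τ - τ₀))) * ∑' j, jwt j ^ (-(τ - τ₀)))
  have hM : 1 ≤ M := Real.one_le_exp <| mul_nonneg (by positivity) <|
    tsum_nonneg fun j => (Real.rpow_pos_of_pos (jwt_pos j) _).le
  have hLK : 1.01 * A - A ≤ K := le_add_of_nonneg_right (by positivity)
  have hK : 0 < K := (by linarith : (0 : ℝ) < 1.01 * A - A).trans_le hLK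
  refine ⟨K * M, by positivity, fun α _ hdio ν hν => ?_⟩
  rcases le_or_gt ν 1 with hν1 | hν1
  · rw [← mul_assoc, ENNReal.ofReal_mul (by positivity)]
    refine volume_Icc_diff_diophantine_le ?_ ?_ ?_ hν₀ hν hν1 hdio <;> linarith
  · calc _ ≤ volume (Set.Icc A (1.01 * A)) := measure_mono Set.sdiff_subset
      _ = ENNReal.ofReal (1.01 * A - A) := Real.volume_Icc
      _ ≤ ENNReal.ofReal (ν * (K * M)) := ENNReal.ofReal_le_ofReal <| hLK.trans <|
          (le_mul_of_one_le_right hK.le hM).trans (le_mul_of_one_le_left (by positivity) hν1.le)
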